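/- arXiv:1312.1304 — 2 statements merged into one kernel-verified Lean document; each statement's English description precedes it below -/
import Mathlib

section
/- Let u be a smooth solution of u_t = u_xx + (1/(2ε))(1 − u²)_x on (−1,1) × (0,T) with no-flux boundary condition −u_x = (1/(2ε))(1 − u²) at x = ±1, and with |u(x,t)| ≤ 1 for all (x,t). Then ∫_0^T ∫_{−1}^1 (1 − u(x,t)²) dx dt ≤ 4ε(1 + T). -/
open MeasureTheory Set intervalIntegral

private lemma auxX (f : ℝ × ℝ → ℝ) (hf : Differentiable ℝ f) (x t : ℝ) :
    HasDerivAt (fun y => f (y, t)) (fderiv ℝ f (x, t) (1, 0)) x := by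
  have h1 : HasFDerivAt (fun y : ℝ => (y, t))
      ((ContinuousLinearMap.id ℝ ℝ).prod 0) x :=
    HasFDerivAt.prodMk (hasFDerivAt_id x) (hasFDerivAt_const t x)
  have h2 := ((hf (x, t)).hasFDerivAt.comp x h1).hasDerivAt
  simpa [Function.comp_def] using h2

private lemma auxT (f : ℝ × ℝ → ℝ) (hf : Differentiable ℝ f) (x t : ℝ) :
    HasDerivAt (fun s => f (x, s)) (fderiv ℝ f (x, t) (0, 1)) t := by
  have h1 : HasFDerivAt (fun s : ℝ => (x, s))
      ((0 : ℝ →L[ℝ] ℝ).prod (ContinuousLinearMap.id ℝ ℝ)) t :=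
    HasFDerivAt.prodMk (hasFDerivAt_const x t) (hasFDerivAt_id t)
  have h2 := ((hf (x, t)).hasFDerivAt.comp t h1).hasDerivAt
  simpa [Function.comp_def] using h2

private lemma auxG (f : ℝ × ℝ → ℝ) (hf : ContDiff ℝ (⊤ : ℕ∞) f) (v : ℝ × ℝ) :
    ContDiff ℝ (⊤ : ℕ∞) (fun p => fderiv ℝ f p v) :=
  (hf.fderiv_right (by simp)).clm_apply contDiff_const

private lemma absint : (∫ x in (-1:ℝ)..1, 2 * |x|) = 2 := by
  have h1 : (∫ x in (-1:ℝ)..0, 2 * |x|) = 1 := by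
    have : ∀ x ∈ uIcc (-1:ℝ) 0, 2 * |x| = -(2*x) := by
      intro x hx
      rw [uIcc_of_le (by norm_num)] at hx
      rw [abs_of_nonpos hx.2]; ring
    rw [intervalIntegral.integral_congr this, intervalIntegral.integral_neg,
      intervalIntegral.integral_const_mul, integral_id]
    norm_num
  have h2 : (∫ x in (0:ℝ)..1, 2 * |x|) = 1 := by
    have : ∀ x ∈ uIcc (0:ℝ) 1, 2 * |x| = 2*x := by
      intro x hx
      rw [uIcc_of_le (by norm_num)] at hx
      rw [abs_of_nonneg hx.1]
    rw [intervalIntegral.integral_congr this, intervalIntegral.integral_const_mul,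
      integral_id]
    norm_num
  have := intervalIntegral.integral_add_adjacent_intervals
    (a := (-1:ℝ)) (b := 0) (c := 1) (f := fun x => 2 * |x|)
    ((continuous_const.mul continuous_abs).intervalIntegrable (μ := volume) _ _)
    ((continuous_const.mul continuous_abs).intervalIntegrable (μ := volume) _ _)
  rw [← this, h1, h2]; norm_num

/-- A priori estimate: for a smooth solution of `u_t = u_xx + (1/(2ε))(1 - u²)_x`
with no-flux boundary conditions and `|u| ≤ 1`, one has
`∫₀ᵀ ∫₋₁¹ (1 - u²) dx dt ≤ 4ε(1 + T)`. -/
theorem stmt_9 (ε T : ℝ) (hε : 0 < ε) (hT : 0 < T)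
    (u : ℝ → ℝ → ℝ) (hu : ContDiff ℝ (⊤ : ℕ∞) (Function.uncurry u))
    (hueq : ∀ x ∈ Set.Ioo (-1 : ℝ) 1, ∀ t ∈ Set.Ioo 0 T,
      deriv (fun s => u x s) t
        = deriv (deriv (fun y => u y t)) x
          + (1 / (2 * ε)) * deriv (fun y => 1 - (u y t) ^ 2) x)
    (hbc : ∀ t ∈ Set.Icc 0 T, ∀ x, x = (1 : ℝ) ∨ x = -1 →
      -deriv (fun y => u y t) x = (1 / (2 * ε)) * (1 - (u x t) ^ 2))
    (hbound : ∀ x ∈ Set.Icc (-1 : ℝ) 1, ∀ t ∈ Set.Icc 0 T, |u x t| ≤ 1) :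
    (∫ t in (0 : ℝ)..T, ∫ x in (-1 : ℝ)..1, (1 - (u x t) ^ 2)) ≤ 4 * ε * (1 + T) := by
  set F := Function.uncurry u with hF
  have hFd : Differentiable ℝ F := hu.differentiable (by simp)
  have hFc : Continuous F := hu.continuous
  set c := 1 / (2 * ε) with hc
  have hcpos : 0 < c := by positivity
  set ux : ℝ × ℝ → ℝ := fun p => fderiv ℝ F p (1, 0) with hux_def
  set ut : ℝ × ℝ → ℝ := fun p => fderiv ℝ F p (0, 1) with hut_def
  have hux_smooth : ContDiff ℝ (⊤ : ℕ∞) ux := auxG F hu (1, 0)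
  have hux_cont : Continuous ux := hux_smooth.continuous
  have hut_cont : Continuous ut := (auxG F hu (0, 1)).continuous
  set uxx : ℝ × ℝ → ℝ := fun p => fderiv ℝ ux p (1, 0) with huxx_def
  have huxx_cont : Continuous uxx := (auxG ux hux_smooth (1, 0)).continuous
  have hdx : ∀ x t : ℝ, HasDerivAt (fun y => u y t) (ux (x, t)) x := fun x t => auxX F hFd x t
  have hdt : ∀ x t : ℝ, HasDerivAt (fun s => u x s) (ut (x, t)) t := fun x t => auxT F hFd x t
  have hdxx : ∀ x t : ℝ, HasDerivAt (fun y => ux (y, t)) (uxx (x, t)) x :=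
    fun x t => auxX ux (hux_smooth.differentiable (by simp)) x t
  have hderivx_eq : ∀ t : ℝ, deriv (fun y => u y t) = fun y => ux (y, t) :=
    fun t => funext fun y => (hdx y t).deriv
  -- derivative of 1 - u²
  set dg : ℝ → ℝ → ℝ := fun x t => -(2 * u x t * ux (x, t)) with hdg_def
  have hdg : ∀ x t : ℝ, HasDerivAt (fun y => 1 - (u y t) ^ 2) (dg x t) x := by
    intro x t
    have h1 : HasDerivAt (fun y => (u y t) ^ 2) (2 * u x t ^ 1 * ux (x, t)) x := (hdx x t).pow 2
    have := h1.const_sub 1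
    simpa [hdg_def] using this
  have hdg_cont : Continuous (fun p : ℝ × ℝ => dg p.1 p.2) := by
    have : Continuous (fun p : ℝ × ℝ => u p.1 p.2) := hFc
    exact ((continuous_const.mul this).mul hux_cont).neg
  -- key pointwise-in-t identity
  have key : ∀ t ∈ Set.Ioo (0:ℝ) T,
      (∫ x in (-1:ℝ)..1, x * ut (x, t))
        = -(u 1 t - u (-1) t) - c * ∫ x in (-1:ℝ)..1, (1 - (u x t) ^ 2) := by
    intro t ht
    have htIcc : t ∈ Set.Icc (0:ℝ) T := ⟨ht.1.le, ht.2.le⟩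
    -- boundary conditions
    have hbc1 : ux (1, t) = -(c * (1 - (u 1 t) ^ 2)) := by
      have := hbc t htIcc 1 (Or.inl rfl)
      rw [hderivx_eq t] at this
      linarith [this]
    have hbc2 : ux (-1, t) = -(c * (1 - (u (-1) t) ^ 2)) := by
      have := hbc t htIcc (-1) (Or.inr rfl)
      rw [hderivx_eq t] at this
      linarith [this]
    -- step 1: replace ut by PDE rhs a.e.
    have hcongr : (∫ x in (-1:ℝ)..1, x * ut (x, t))
        = ∫ x in (-1:ℝ)..1, (x * uxx (x, t) + c * (x * dg x t)) := by
      apply intervalIntegral.integral_congr_ae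
      have hne : ∀ᵐ (x : ℝ), x ≠ 1 := by
        refine ae_iff.mpr ?_
        simpa using (by simp : volume ({(1:ℝ)}) = 0)
      filter_upwards [hne] with x hx hmem
      rw [Set.uIoc_of_le (by norm_num : (-1:ℝ) ≤ 1)] at hmem
      have hxin : x ∈ Set.Ioo (-1:ℝ) 1 := ⟨hmem.1, lt_of_le_of_ne hmem.2 hx⟩
      have heq := hueq x hxin t ht
      rw [(hdt x t).deriv, hderivx_eq t, (hdxx x t).deriv, (hdg x t).deriv] at heq
      rw [heq]; ring
    rw [hcongr]
    have hint1 : IntervalIntegrable (fun x => x * uxx (x, t)) volume (-1) 1 :=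
      (continuous_id.mul (huxx_cont.comp (continuous_id.prodMk continuous_const))).intervalIntegrable _ _
    have hint2 : IntervalIntegrable (fun x => c * (x * dg x t)) volume (-1) 1 := by
      refine (continuous_const.mul (continuous_id.mul ?_)).intervalIntegrable _ _
      exact hdg_cont.comp (continuous_id.prodMk continuous_const)
    rw [intervalIntegral.integral_add hint1 hint2, intervalIntegral.integral_const_mul]
    -- integration by parts for x * uxx
    have hibp1 : (∫ x in (-1:ℝ)..1, x * uxx (x, t))
        = ux (1, t) + ux (-1, t) - (u 1 t - u (-1) t) := by
      have h := intervalIntegral.integral_mul_deriv_eq_deriv_mul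
        (a := (-1:ℝ)) (b := 1) (u := fun x => x) (u' := fun _ => (1:ℝ))
        (v := fun y => ux (y, t)) (v' := fun y => uxx (y, t))
        (fun x _ => hasDerivAt_id x) (fun x _ => hdxx x t)
        ((continuous_const).intervalIntegrable _ _)
        ((huxx_cont.comp (continuous_id.prodMk continuous_const)).intervalIntegrable _ _)
      have hftc : (∫ y in (-1:ℝ)..1, ux (y, t)) = u 1 t - u (-1) t := by
        exact intervalIntegral.integral_eq_sub_of_hasDerivAt (fun y _ => hdx y t)
          ((hux_cont.comp (continuous_id.prodMk continuous_const)).intervalIntegrable _ _)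
      rw [h]
      simp only [one_mul]
      rw [hftc]
      ring
    -- integration by parts for x * dg
    have hibp2 : (∫ x in (-1:ℝ)..1, x * dg x t)
        = (1 - (u 1 t) ^ 2) + (1 - (u (-1) t) ^ 2) - ∫ x in (-1:ℝ)..1, (1 - (u x t) ^ 2) := by
      have h := intervalIntegral.integral_mul_deriv_eq_deriv_mul
        (a := (-1:ℝ)) (b := 1) (u := fun x => x) (u' := fun _ => (1:ℝ))
        (v := fun y => 1 - (u y t) ^ 2) (v' := fun y => dg y t)
        (fun x _ => hasDerivAt_id x) (fun x _ => hdg x t)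
        ((continuous_const).intervalIntegrable _ _)
        ((hdg_cont.comp (continuous_id.prodMk continuous_const)).intervalIntegrable _ _)
      rw [h]
      simp only [one_mul]
      ring
    rw [hibp1, hibp2, hbc1, hbc2]
    ring
  -- integrability in t of the inner integrals
  have hcont_pair : Continuous (fun p : ℝ × ℝ => p.2 * ut (p.2, p.1)) :=
    continuous_snd.mul (hut_cont.comp (continuous_snd.prodMk continuous_fst))
  have hcont_inner : Continuous (fun t => ∫ x in (-1:ℝ)..1, x * ut (x, t)) := by
    exact intervalIntegral.continuous_parametric_intervalIntegral_of_continuous'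
      (f := fun t x => x * ut (x, t)) (μ := volume) hcont_pair (-1) 1
  have hcont_bd : Continuous (fun t => u 1 t - u (-1) t) := by
    have h1 : Continuous (fun t => u 1 t) := hFc.comp (continuous_const.prodMk continuous_id)
    have h2 : Continuous (fun t => u (-1) t) := hFc.comp (continuous_const.prodMk continuous_id)
    exact h1.sub h2
  -- integrate the key identity over t
  have hstep : (∫ t in (0:ℝ)..T, c * ∫ x in (-1:ℝ)..1, (1 - (u x t) ^ 2))
      = ∫ t in (0:ℝ)..T, (-(u 1 t - u (-1) t) - ∫ x in (-1:ℝ)..1, x * ut (x, t)) := by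
    apply intervalIntegral.integral_congr_ae
    have hne : ∀ᵐ (t : ℝ), t ≠ T := by
      refine ae_iff.mpr ?_
      simpa using (by simp : volume ({T}) = 0)
    filter_upwards [hne] with t htne hmem
    rw [Set.uIoc_of_le hT.le] at hmem
    have htin : t ∈ Set.Ioo (0:ℝ) T := ⟨hmem.1, lt_of_le_of_ne hmem.2 htne⟩
    have := key t htin
    linarith [this]
  have hclhs : c * (∫ t in (0:ℝ)..T, ∫ x in (-1:ℝ)..1, (1 - (u x t) ^ 2))
      = -(∫ t in (0:ℝ)..T, (u 1 t - u (-1) t))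
        - ∫ t in (0:ℝ)..T, ∫ x in (-1:ℝ)..1, x * ut (x, t) := by
    rw [← intervalIntegral.integral_const_mul, hstep,
      intervalIntegral.integral_sub (f := fun t => -(u 1 t - u (-1) t)) (hcont_bd.neg.intervalIntegrable _ _)
        (hcont_inner.intervalIntegrable _ _),
      intervalIntegral.integral_neg]
  -- Fubini + FTC in t
  have hJ_eq : (∫ t in (0:ℝ)..T, ∫ x in (-1:ℝ)..1, x * ut (x, t))
      = ∫ x in (-1:ℝ)..1, x * (u x T - u x 0) := by
    have h1le : (-1:ℝ) ≤ 1 := by norm_num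
    have hInt : Integrable (Function.uncurry fun t x => x * ut (x, t))
        ((volume.restrict (Set.Ioc (0:ℝ) T)).prod (volume.restrict (Set.Ioc (-1:ℝ) 1))) := by
      rw [Measure.prod_restrict, ← Measure.volume_eq_prod]
      exact (hcont_pair.integrableOn_Icc (a := ((0:ℝ),(-1:ℝ))) (b := (T,1))).mono_set
        (by rw [Set.Icc_prod_eq]; exact Set.prod_mono Set.Ioc_subset_Icc_self Set.Ioc_subset_Icc_self)
    rw [intervalIntegral.integral_of_le hT.le]
    simp only [intervalIntegral.integral_of_le h1le]
    rw [MeasureTheory.integral_integral_swap hInt]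
    refine MeasureTheory.integral_congr_ae (Filter.Eventually.of_forall fun x => ?_)
    show (∫ t in Set.Ioc (0:ℝ) T, x * ut (x, t)) = x * (u x T - u x 0)
    rw [← intervalIntegral.integral_of_le hT.le]
    have hftc : (∫ t in (0:ℝ)..T, ut (x, t)) = u x T - u x 0 :=
      intervalIntegral.integral_eq_sub_of_hasDerivAt (fun t _ => hdt x t)
        ((hut_cont.comp (continuous_const.prodMk continuous_id)).intervalIntegrable _ _)
    rw [intervalIntegral.integral_const_mul, hftc]
  -- bounds
  have hboundA : |∫ t in (0:ℝ)..T, (u 1 t - u (-1) t)| ≤ 2 * T := by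
    have h := intervalIntegral.norm_integral_le_of_norm_le_const
      (a := (0:ℝ)) (b := T) (C := 2) (f := fun t => u 1 t - u (-1) t) ?_
    · rw [Real.norm_eq_abs] at h
      calc |∫ t in (0:ℝ)..T, (u 1 t - u (-1) t)| ≤ 2 * |T - 0| := h
        _ = 2 * T := by rw [sub_zero, abs_of_pos hT]
    · intro t ht
      rw [Set.uIoc_of_le hT.le] at ht
      have htIcc : t ∈ Set.Icc (0:ℝ) T := ⟨ht.1.le, ht.2⟩
      have h1 := hbound 1 (by norm_num) t htIcc
      have h2 := hbound (-1) (by norm_num) t htIcc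
      rw [Real.norm_eq_abs]
      calc |u 1 t - u (-1) t| ≤ |u 1 t| + |u (-1) t| := abs_sub _ _
        _ ≤ 2 := by linarith
  have hboundB : |∫ x in (-1:ℝ)..1, x * (u x T - u x 0)| ≤ 2 := by
    have h1le : (-1:ℝ) ≤ 1 := by norm_num
    have hcontB : Continuous (fun x => x * (u x T - u x 0)) := by
      have hT' : Continuous (fun x => u x T) := hFc.comp (continuous_id.prodMk continuous_const)
      have h0' : Continuous (fun x => u x 0) := hFc.comp (continuous_id.prodMk continuous_const)
      exact continuous_id.mul (hT'.sub h0')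
    calc |∫ x in (-1:ℝ)..1, x * (u x T - u x 0)|
        ≤ ∫ x in (-1:ℝ)..1, |x * (u x T - u x 0)| :=
          intervalIntegral.abs_integral_le_integral_abs h1le
      _ ≤ ∫ x in (-1:ℝ)..1, 2 * |x| := by
          apply intervalIntegral.integral_mono_on h1le
            (hcontB.abs.intervalIntegrable _ _)
            ((continuous_const.mul continuous_abs).intervalIntegrable (μ := volume) _ _)
          intro x hx
          have hT' := hbound x hx T ⟨hT.le, le_refl T⟩
          have h0' := hbound x hx 0 ⟨le_refl 0, hT.le⟩
          rw [abs_mul]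
          have : |u x T - u x 0| ≤ 2 := by
            calc |u x T - u x 0| ≤ |u x T| + |u x 0| := abs_sub _ _
              _ ≤ 2 := by linarith
          exact (by nlinarith [abs_nonneg x, abs_nonneg (u x T - u x 0)] : |x| * |u x T - u x 0| ≤ 2 * |x|)
      _ = 2 := absint
  -- conclude
  rw [hJ_eq] at hclhs
  have habsA := abs_le.mp hboundA
  have habsB := abs_le.mp hboundB
  have hfin : c * (∫ t in (0:ℝ)..T, ∫ x in (-1:ℝ)..1, (1 - (u x t) ^ 2)) ≤ 2 * T + 2 := by
    rw [hclhs]; linarith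
  have h2e : (0:ℝ) < 2 * ε := by positivity
  have hmul := mul_le_mul_of_nonneg_right hfin h2e.le
  have hcc : c * (2 * ε) = 1 := by rw [hc]; field_simp
  nlinarith [hmul, hcc]
end

section
/- Suppose u, h are smooth on [−1,1] × [0,T] with |u(x,t)| ≤ h(x,t), u solves u_t = u_xx + (1/(2ε))(h² − u²)_x with no-flux boundary conditions −u_x = (1/(2ε))(h² − u²) at x = ±1, and h solves the heat equation with Neumann boundary conditions and 0 ≤ h ≤ M := sup h. Then ∫_0^T ∫_{−1}^1 (h(x,t)² − u(x,t)²) dx dt ≤ 4ε(1 + T)·M. -/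
open Set MeasureTheory intervalIntegral

noncomputable def pd (v : ℝ × ℝ) (f : ℝ → ℝ → ℝ) (x t : ℝ) : ℝ :=
  fderiv ℝ (Function.uncurry f) (x, t) v

lemma contDiff_pd {f : ℝ → ℝ → ℝ} (hf : ContDiff ℝ (⊤ : ℕ∞) (Function.uncurry f)) (v : ℝ × ℝ) :
    ContDiff ℝ (⊤ : ℕ∞) (Function.uncurry (pd v f)) := by
  have : Function.uncurry (pd v f) = fun p : ℝ × ℝ => fderiv ℝ (Function.uncurry f) p v := rfl
  rw [this]
  exact (hf.fderiv_right (by simp)).clm_apply contDiff_const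

lemma hasDerivAt_pd_x {f : ℝ → ℝ → ℝ} (hf : ContDiff ℝ (⊤ : ℕ∞) (Function.uncurry f)) (x t : ℝ) :
    HasDerivAt (fun y => f y t) (pd (1, 0) f x t) x := by
  have h1 : HasDerivAt (fun y : ℝ => (y, t)) ((1 : ℝ), (0 : ℝ)) x :=
    (hasDerivAt_id x).prodMk (hasDerivAt_const x t)
  have h2 : HasFDerivAt (Function.uncurry f) (fderiv ℝ (Function.uncurry f) (x, t)) (x, t) :=
    (hf.differentiable (by simp) (x, t)).hasFDerivAt
  exact h2.comp_hasDerivAt x h1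

lemma hasDerivAt_pd_t {f : ℝ → ℝ → ℝ} (hf : ContDiff ℝ (⊤ : ℕ∞) (Function.uncurry f)) (x t : ℝ) :
    HasDerivAt (fun s => f x s) (pd (0, 1) f x t) t := by
  have h1 : HasDerivAt (fun s : ℝ => (x, s)) ((0 : ℝ), (1 : ℝ)) t :=
    (hasDerivAt_const t x).prodMk (hasDerivAt_id t)
  have h2 : HasFDerivAt (Function.uncurry f) (fderiv ℝ (Function.uncurry f) (x, t)) (x, t) :=
    (hf.differentiable (by simp) (x, t)).hasFDerivAt
  exact h2.comp_hasDerivAt t h1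

lemma cont_slice_x {f : ℝ → ℝ → ℝ} (hf : ContDiff ℝ (⊤ : ℕ∞) (Function.uncurry f)) (t : ℝ) :
    Continuous fun x => f x t :=
  hf.continuous.comp (continuous_id.prodMk continuous_const)

lemma cont_slice_t {f : ℝ → ℝ → ℝ} (hf : ContDiff ℝ (⊤ : ℕ∞) (Function.uncurry f)) (x : ℝ) :
    Continuous fun t => f x t :=
  hf.continuous.comp (continuous_const.prodMk continuous_id)

lemma integral_abs_id : (∫ x in (-1 : ℝ)..1, |x|) = 1 := by
  have h1 : (∫ x in (-1 : ℝ)..0, |x|) = 1 / 2 := by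
    rw [intervalIntegral.integral_congr (g := fun x => -x)]
    · rw [intervalIntegral.integral_neg, integral_id]; norm_num
    · intro x hx
      rw [Set.uIcc_of_le (by norm_num)] at hx
      exact abs_of_nonpos hx.2
  have h2 : (∫ x in (0 : ℝ)..1, |x|) = 1 / 2 := by
    rw [intervalIntegral.integral_congr (g := fun x => x)]
    · simp [integral_id]
    · intro x hx
      rw [Set.uIcc_of_le (by norm_num)] at hx
      exact abs_of_nonneg hx.1
  rw [← intervalIntegral.integral_add_adjacent_intervals (b := (0:ℝ))
    (continuous_abs.intervalIntegrable _ _) (continuous_abs.intervalIntegrable _ _), h1, h2]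
  norm_num

lemma hasDerivAt_moment {f : ℝ → ℝ → ℝ} (hf : ContDiff ℝ (⊤ : ℕ∞) (Function.uncurry f)) (t₀ : ℝ) :
    HasDerivAt (fun t => ∫ x in (-1 : ℝ)..1, x * f x t)
      (∫ x in (-1 : ℝ)..1, x * pd (0, 1) f x t₀) t₀ := by
  have hpd := contDiff_pd hf (0, 1)
  have hcontpd : Continuous (Function.uncurry (pd (0,1) f)) := hpd.continuous
  -- bound on compact set
  obtain ⟨C, hC⟩ := (isCompact_Icc.prod isCompact_Icc :
      IsCompact ((Icc (-1 : ℝ) 1) ×ˢ (Icc (t₀ - 1) (t₀ + 1)))).exists_bound_of_continuousOn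
    ((continuous_fst.mul hcontpd : Continuous fun p : ℝ × ℝ => p.1 * pd (0,1) f p.1 p.2).continuousOn)
  have main := intervalIntegral.hasDerivAt_integral_of_dominated_loc_of_deriv_le
    (F := fun t x => x * f x t) (F' := fun t x => x * pd (0, 1) f x t)
    (x₀ := t₀) (a := (-1 : ℝ)) (b := 1) (bound := fun _ => |C| + 1) (s := Metric.ball t₀ 1) (Metric.ball_mem_nhds t₀ one_pos)
    (Filter.Eventually.of_forall fun t =>
      ((continuous_id.mul (cont_slice_x hf t)).aestronglyMeasurable))
    ((continuous_id.mul (cont_slice_x hf t₀)).intervalIntegrable _ _)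
    ((continuous_id.mul (cont_slice_x hpd t₀)).aestronglyMeasurable)
    ?_ ((intervalIntegrable_const : IntervalIntegrable (fun _ => |C| + 1) MeasureTheory.volume (-1) 1)) ?_
  · exact main.2
  · refine Filter.Eventually.of_forall fun x hx s hs => ?_
    have hx' : x ∈ Icc (-1 : ℝ) 1 := Ioc_subset_Icc_self (by rwa [Set.uIoc_of_le (by norm_num)] at hx)
    have hs' : s ∈ Icc (t₀ - 1) (t₀ + 1) := by
      have := Metric.mem_ball.1 hs
      rw [Real.dist_eq] at this
      constructor <;> [linarith [abs_lt.1 this]; linarith [abs_lt.1 this]]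
    calc ‖x * pd (0, 1) f x s‖ ≤ C := hC (x, s) (Set.mk_mem_prod hx' hs')
      _ ≤ |C| + 1 := by have := le_abs_self C; linarith
  · refine Filter.Eventually.of_forall fun x _ s _ => ?_
    exact (hasDerivAt_pd_t hf x s).const_mul x


/-- A priori estimate for general `h`: if `|u| ≤ h`, `u` solves
`u_t = u_xx + (1/(2ε))(h² - u²)_x` with no-flux boundary conditions, and `h` solves
the heat equation with Neumann boundary conditions with `0 ≤ h ≤ M`, then
`∫₀ᵀ ∫₋₁¹ (h² - u²) dx dt ≤ 4ε(1 + T) M`. -/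
theorem stmt_15 (ε T M : ℝ) (hε : 0 < ε) (hT : 0 < T)
    (u h : ℝ → ℝ → ℝ)
    (hu : ContDiff ℝ (⊤ : ℕ∞) (Function.uncurry u)) (hh : ContDiff ℝ (⊤ : ℕ∞) (Function.uncurry h))
    (hbnd : ∀ x ∈ Set.Icc (-1 : ℝ) 1, ∀ t ∈ Set.Icc 0 T, |u x t| ≤ h x t)
    (hM : ∀ x ∈ Set.Icc (-1 : ℝ) 1, ∀ t ∈ Set.Icc 0 T, 0 ≤ h x t ∧ h x t ≤ M)
    (hueq : ∀ x ∈ Set.Ioo (-1 : ℝ) 1, ∀ t ∈ Set.Ioo 0 T,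
      deriv (fun s => u x s) t
        = deriv (deriv (fun y => u y t)) x
          + (1 / (2 * ε)) * deriv (fun y => (h y t) ^ 2 - (u y t) ^ 2) x)
    (hubc : ∀ t ∈ Set.Icc 0 T, ∀ x, x = (1 : ℝ) ∨ x = -1 →
      -deriv (fun y => u y t) x = (1 / (2 * ε)) * ((h x t) ^ 2 - (u x t) ^ 2))
    (hheat : ∀ x ∈ Set.Ioo (-1 : ℝ) 1, ∀ t ∈ Set.Ioo 0 T,
      deriv (fun s => h x s) t = deriv (deriv (fun y => h y t)) x)
    (hneumann : ∀ t ∈ Set.Icc 0 T, ∀ x, x = (1 : ℝ) ∨ x = -1 →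
      deriv (fun y => h y t) x = 0) :
    (∫ t in (0 : ℝ)..T, ∫ x in (-1 : ℝ)..1, ((h x t) ^ 2 - (u x t) ^ 2))
      ≤ 4 * ε * (1 + T) * M := by
  have hM0 : 0 ≤ M := by
    have := hM 0 (by norm_num) 0 ⟨le_refl 0, hT.le⟩
    linarith [this.1, this.2]
  have huM : ∀ x ∈ Set.Icc (-1 : ℝ) 1, ∀ t ∈ Set.Icc 0 T, |u x t| ≤ M := fun x hx t ht =>
    (hbnd x hx t ht).trans (hM x hx t ht).2
  -- the function g = h² - u²
  have hg : ContDiff ℝ (⊤ : ℕ∞) (Function.uncurry fun x t => h x t ^ 2 - u x t ^ 2) := by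
    have : (Function.uncurry fun x t => h x t ^ 2 - u x t ^ 2)
        = fun p : ℝ × ℝ => (Function.uncurry h p) ^ 2 - (Function.uncurry u p) ^ 2 := rfl
    rw [this]; exact (hh.pow 2).sub (hu.pow 2)
  have hux : ContDiff ℝ (⊤ : ℕ∞) (Function.uncurry (pd (1, 0) u)) := contDiff_pd hu _
  have hut : ContDiff ℝ (⊤ : ℕ∞) (Function.uncurry (pd (0, 1) u)) := contDiff_pd hu _
  have huxx : ContDiff ℝ (⊤ : ℕ∞) (Function.uncurry (pd (1, 0) (pd (1, 0) u))) := contDiff_pd hux _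
  have hgx : ContDiff ℝ (⊤ : ℕ∞) (Function.uncurry (pd (1, 0) fun x t => h x t ^ 2 - u x t ^ 2)) :=
    contDiff_pd hg _
  -- PDE in terms of pd
  have pde : ∀ x ∈ Set.Ioo (-1 : ℝ) 1, ∀ t ∈ Set.Ioo 0 T,
      pd (0, 1) u x t = pd (1, 0) (pd (1, 0) u) x t
        + (1 / (2 * ε)) * pd (1, 0) (fun x t => h x t ^ 2 - u x t ^ 2) x t := by
    intro x hx t ht
    have e1 : deriv (fun s => u x s) t = pd (0, 1) u x t := (hasDerivAt_pd_t hu x t).deriv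
    have e2 : deriv (fun y => u y t) = fun y => pd (1, 0) u y t :=
      funext fun y => (hasDerivAt_pd_x hu y t).deriv
    have e3 : deriv (deriv (fun y => u y t)) x = pd (1, 0) (pd (1, 0) u) x t := by
      rw [e2]; exact (hasDerivAt_pd_x hux x t).deriv
    have e4 : deriv (fun y => (h y t) ^ 2 - (u y t) ^ 2) x
        = pd (1, 0) (fun x t => h x t ^ 2 - u x t ^ 2) x t := (hasDerivAt_pd_x hg x t).deriv
    have := hueq x hx t ht
    rw [e1, e3, e4] at this
    exact this
  -- boundary conditions in terms of pd
  have bc : ∀ t ∈ Set.Icc (0 : ℝ) T, ∀ x, x = (1 : ℝ) ∨ x = -1 →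
      pd (1, 0) u x t = -((1 / (2 * ε)) * ((h x t) ^ 2 - (u x t) ^ 2)) := by
    intro t ht x hx
    have := hubc t ht x hx
    rw [(hasDerivAt_pd_x hu x t).deriv] at this
    linarith
  -- derivative of the first moment
  have hF' : ∀ t₀ : ℝ, HasDerivAt (fun t => ∫ x in (-1 : ℝ)..1, x * u x t)
      (∫ x in (-1 : ℝ)..1, x * pd (0, 1) u x t₀) t₀ := fun t₀ => hasDerivAt_moment hu t₀
  -- the key identity for t in the interior
  have key : ∀ t ∈ Set.Ioo (0 : ℝ) T,
      (∫ x in (-1 : ℝ)..1, x * pd (0, 1) u x t)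
        = -(u 1 t - u (-1) t)
          - (1 / (2 * ε)) * ∫ x in (-1 : ℝ)..1, ((h x t) ^ 2 - (u x t) ^ 2) := by
    intro t ht
    have hne1 : ∀ᵐ x : ℝ, x ≠ (1 : ℝ) := by
      rw [MeasureTheory.ae_iff]
      convert Real.volume_singleton (a := (1 : ℝ)) using 2
      ext x; simp
    have hae : (∫ x in (-1 : ℝ)..1, x * pd (0, 1) u x t)
        = ∫ x in (-1 : ℝ)..1, (x * pd (1, 0) (pd (1, 0) u) x t
            + (1 / (2 * ε)) * (x * pd (1, 0) (fun x t => h x t ^ 2 - u x t ^ 2) x t)) := by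
      apply intervalIntegral.integral_congr_ae
      filter_upwards [hne1] with x hx hmem
      rw [Set.uIoc_of_le (by norm_num : (-1 : ℝ) ≤ 1)] at hmem
      have hxIoo : x ∈ Set.Ioo (-1 : ℝ) 1 := ⟨hmem.1, lt_of_le_of_ne hmem.2 hx⟩
      rw [pde x hxIoo t ht]; ring
    rw [hae]
    have int1 : IntervalIntegrable (fun x => x * pd (1, 0) (pd (1, 0) u) x t)
        MeasureTheory.volume (-1) 1 :=
      (continuous_id.mul (cont_slice_x huxx t)).intervalIntegrable _ _
    have int2 : IntervalIntegrable
        (fun x => x * pd (1, 0) (fun x t => h x t ^ 2 - u x t ^ 2) x t)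
        MeasureTheory.volume (-1) 1 :=
      (continuous_id.mul (cont_slice_x hgx t)).intervalIntegrable _ _
    rw [intervalIntegral.integral_add int1 (int2.const_mul _), intervalIntegral.integral_const_mul]
    -- integration by parts for the uxx term
    have ibp1 : (∫ x in (-1 : ℝ)..1, x * pd (1, 0) (pd (1, 0) u) x t)
        = (1 : ℝ) * pd (1, 0) u 1 t - (-1 : ℝ) * pd (1, 0) u (-1) t
          - ∫ x in (-1 : ℝ)..1, (1 : ℝ) * pd (1, 0) u x t :=
      intervalIntegral.integral_mul_deriv_eq_deriv_mul
        (fun x _ => hasDerivAt_id x) (fun x _ => hasDerivAt_pd_x hux x t)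
        ((continuous_const).intervalIntegrable _ _)
        ((cont_slice_x huxx t).intervalIntegrable _ _)
    have ibp2 : (∫ x in (-1 : ℝ)..1, x * pd (1, 0) (fun x t => h x t ^ 2 - u x t ^ 2) x t)
        = (1 : ℝ) * ((h 1 t) ^ 2 - (u 1 t) ^ 2) - (-1 : ℝ) * ((h (-1) t) ^ 2 - (u (-1) t) ^ 2)
          - ∫ x in (-1 : ℝ)..1, (1 : ℝ) * ((h x t) ^ 2 - (u x t) ^ 2) :=
      intervalIntegral.integral_mul_deriv_eq_deriv_mul
        (fun x _ => hasDerivAt_id x) (fun x _ => hasDerivAt_pd_x hg x t)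
        ((continuous_const).intervalIntegrable _ _)
        ((cont_slice_x hgx t).intervalIntegrable _ _)
    have ftc1 : (∫ x in (-1 : ℝ)..1, pd (1, 0) u x t) = u 1 t - u (-1) t :=
      intervalIntegral.integral_eq_sub_of_hasDerivAt
        (fun x _ => hasDerivAt_pd_x hu x t) ((cont_slice_x hux t).intervalIntegrable _ _)
    have hsimp1 : (∫ x in (-1 : ℝ)..1, (1 : ℝ) * pd (1, 0) u x t)
        = ∫ x in (-1 : ℝ)..1, pd (1, 0) u x t := by simp
    have hsimp2 : (∫ x in (-1 : ℝ)..1, (1 : ℝ) * ((h x t) ^ 2 - (u x t) ^ 2))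
        = ∫ x in (-1 : ℝ)..1, ((h x t) ^ 2 - (u x t) ^ 2) := by simp
    have ht' : t ∈ Set.Icc (0 : ℝ) T := ⟨ht.1.le, ht.2.le⟩
    have b1 := bc t ht' 1 (Or.inl rfl)
    have b2 := bc t ht' (-1) (Or.inr rfl)
    rw [ibp1, ibp2, hsimp1, hsimp2, ftc1, b1, b2]
    ring
  -- continuity of the various t-integrands
  have hGcont : Continuous fun t => ∫ x in (-1 : ℝ)..1, ((h x t) ^ 2 - (u x t) ^ 2) := by
    apply intervalIntegral.continuous_parametric_intervalIntegral_of_continuous'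
    exact hg.continuous.comp (continuous_snd.prodMk continuous_fst)
  have hDcont : Continuous fun t => ∫ x in (-1 : ℝ)..1, x * pd (0, 1) u x t := by
    apply intervalIntegral.continuous_parametric_intervalIntegral_of_continuous'
    exact continuous_snd.mul (hut.continuous.comp (continuous_snd.prodMk continuous_fst))
  -- FTC in time
  have hFTC : (∫ t in (0 : ℝ)..T, ∫ x in (-1 : ℝ)..1, x * pd (0, 1) u x t)
      = (∫ x in (-1 : ℝ)..1, x * u x T) - ∫ x in (-1 : ℝ)..1, x * u x 0 :=
    intervalIntegral.integral_eq_sub_of_hasDerivAt (fun t _ => hF' t)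
      (hDcont.intervalIntegrable _ _)
  -- rewrite the double integral
  have hbcont : Continuous fun t => u 1 t - u (-1) t :=
    (cont_slice_t hu 1).sub (cont_slice_t hu (-1))
  have hdouble : (1 / (2 * ε)) * (∫ t in (0 : ℝ)..T, ∫ x in (-1 : ℝ)..1,
        ((h x t) ^ 2 - (u x t) ^ 2))
      = -((∫ x in (-1 : ℝ)..1, x * u x T) - ∫ x in (-1 : ℝ)..1, x * u x 0)
        - ∫ t in (0 : ℝ)..T, (u 1 t - u (-1) t) := by
    rw [← intervalIntegral.integral_const_mul]
    have hneT : ∀ᵐ t : ℝ, t ≠ T := by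
      rw [MeasureTheory.ae_iff]
      convert Real.volume_singleton (a := T) using 2
      ext x; simp
    have congr1 : (∫ t in (0 : ℝ)..T, (1 / (2 * ε)) * ∫ x in (-1 : ℝ)..1,
          ((h x t) ^ 2 - (u x t) ^ 2))
        = ∫ t in (0 : ℝ)..T, (-(∫ x in (-1 : ℝ)..1, x * pd (0, 1) u x t)
            - (u 1 t - u (-1) t)) := by
      apply intervalIntegral.integral_congr_ae
      filter_upwards [hneT] with t htne hmem
      rw [Set.uIoc_of_le hT.le] at hmem
      have htIoo : t ∈ Set.Ioo (0 : ℝ) T := ⟨hmem.1, lt_of_le_of_ne hmem.2 htne⟩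
      rw [key t htIoo]; ring
    rw [congr1, intervalIntegral.integral_sub (f := fun t => -∫ x in (-1 : ℝ)..1, x * pd (0, 1) u x t)
        ((hDcont.neg).intervalIntegrable _ _)
      (hbcont.intervalIntegrable _ _), intervalIntegral.integral_neg, hFTC]
  -- bound on the first moment
  have hFbound : ∀ t ∈ Set.Icc (0 : ℝ) T, |∫ x in (-1 : ℝ)..1, x * u x t| ≤ M := by
    intro t ht
    have hb : ∀ᵐ x ∂(MeasureTheory.volume.restrict (Set.uIoc (-1 : ℝ) 1)),
        ‖x * u x t‖ ≤ M * |x| := by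
      rw [MeasureTheory.ae_restrict_iff' measurableSet_uIoc]
      refine Filter.Eventually.of_forall fun x hx => ?_
      rw [Set.uIoc_of_le (by norm_num : (-1 : ℝ) ≤ 1)] at hx
      have hx' : x ∈ Set.Icc (-1 : ℝ) 1 := Set.Ioc_subset_Icc_self hx
      calc ‖x * u x t‖ = |x| * |u x t| := by rw [Real.norm_eq_abs, abs_mul]
        _ ≤ |x| * M := mul_le_mul_of_nonneg_left (huM x hx' t ht) (abs_nonneg x)
        _ = M * |x| := mul_comm _ _
    have hint : IntervalIntegrable (fun x : ℝ => M * |x|) MeasureTheory.volume (-1) 1 :=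
      (continuous_const.mul continuous_abs).intervalIntegrable _ _
    have := intervalIntegral.norm_integral_le_abs_of_norm_le hb hint
    rw [intervalIntegral.integral_const_mul, integral_abs_id] at this
    simpa [abs_of_nonneg hM0] using this
  -- bound on the boundary term
  have hIbound : -(2 * M) * T ≤ ∫ t in (0 : ℝ)..T, (u 1 t - u (-1) t) := by
    have hmono := intervalIntegral.integral_mono_on (a := (0 : ℝ)) (b := T)
      (f := fun _ => -(2 * M)) (g := fun t => u 1 t - u (-1) t) hT.le
      ((intervalIntegrable_const : IntervalIntegrable (fun _ => -(2*M)) MeasureTheory.volume 0 T)) (hbcont.intervalIntegrable _ _) ?_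
    · have : -(2 * M) * T = -(2 * (T * M)) := by ring
      rw [this]; simpa using hmono
    · intro t ht
      have h1 := abs_le.1 (huM 1 (by norm_num) t ht)
      have h2 := abs_le.1 (huM (-1) (by norm_num) t ht)
      show -(2 * M) ≤ u 1 t - u (-1) t
      linarith [h1.1, h1.2, h2.1, h2.2]
  -- conclude
  have hF0 := hFbound 0 ⟨le_refl 0, hT.le⟩
  have hFT := hFbound T ⟨hT.le, le_refl T⟩
  have heq : (∫ t in (0 : ℝ)..T, ∫ x in (-1 : ℝ)..1, ((h x t) ^ 2 - (u x t) ^ 2))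
      = (2 * ε) * (-((∫ x in (-1 : ℝ)..1, x * u x T) - ∫ x in (-1 : ℝ)..1, x * u x 0)
        - ∫ t in (0 : ℝ)..T, (u 1 t - u (-1) t)) := by
    rw [← hdouble]; field_simp
  rw [heq]
  have hA := abs_le.1 hF0
  have hB := abs_le.1 hFT
  nlinarith [hIbound, hA.1, hA.2, hB.1, hB.2, hε.le, hM0, hT.le]
end
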